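/- Let m̄ be a nonzero complex semisimple Lie algebra that is a direct sum of simple ideals mᵢ, equipped with a symmetric nondegenerate invariant bilinear form whose restriction to each mᵢ is a positive multiple of the Killing form of mᵢ. If σ is an involution of m̄ that does not preserve any simple ideal mᵢ (an f-involution), then the fixed point subalgebra m̄^σ is not isotropic with respect to this form. -/

import Mathlib

/-!
Each simple ideal `I i` is a nonabelian atom of the lattice of ideals, hence perfect. The
automorphism `σ` carries it to another nonabelian atom `S`, and `S` must be one of the `I j`:
otherwise `S` would meet every `I j` trivially, commute with all of them, and so be abelian.
By hypothesis `j ≠ i`. Perfectness and invariance make distinct `I k` orthogonal for `B`,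
and since `B` is a positive multiple of the Killing form on both `I i` and `I j`, while `σ`
preserves Killing forms, `B (σ x) (σ y) = μ B x y` on `I i` for some `μ > 0`. Choosing
`x, y ∈ I i` with `B x y ≠ 0` (nondegeneracy), the fixed vectors `x + σ x` and `y + σ y`
pair to `(1 + μ) B x y ≠ 0`.
-/

open Function LieAlgebra LieModule

section

variable {R L L' : Type*} [CommRing R] [LieRing L] [LieAlgebra R L] [LieRing L'] [LieAlgebra R L']

def LieEquiv.restrictLieIdeal (e : L ≃ₗ⁅R⁆ L') {I : LieIdeal R L} {J : LieIdeal R L'}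
    (h : ∀ x, x ∈ I ↔ e x ∈ J) : I ≃ₗ⁅R⁆ J where
  toFun x := ⟨e x, (h x).mp x.2⟩
  map_add' x y := Subtype.ext (e.map_add x y)
  map_smul' c x := Subtype.ext (e.map_smul c x)
  map_lie' {x y} := Subtype.ext (e.map_lie x y)
  invFun y := ⟨e.symm y, (h _).mpr (by simp)⟩
  left_inv x := Subtype.ext (e.symm_apply_apply x)
  right_inv y := Subtype.ext (e.apply_symm_apply y)

def LieEquiv.lieIdealOrderIso (e : L ≃ₗ⁅R⁆ L') : LieIdeal R L ≃o LieIdeal R L' where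
  toFun I := I.comap (e.symm : L' →ₗ⁅R⁆ L)
  invFun J := J.comap (e : L →ₗ⁅R⁆ L')
  left_inv I := by ext; simp [LieIdeal.mem_comap]
  right_inv J := by ext; simp [LieIdeal.mem_comap]
  map_rel_iff' {I J} := by
    refine ⟨fun h x hx => ?_, fun h => LieIdeal.comap_mono h⟩
    simpa [LieIdeal.mem_comap] using h (x := e x) (by simpa [LieIdeal.mem_comap])

lemma LieEquiv.mem_iff_apply_mem_lieIdealOrderIso (e : L ≃ₗ⁅R⁆ L') (I : LieIdeal R L) (x : L) :
    x ∈ I ↔ e x ∈ e.lieIdealOrderIso I := by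
  simp [lieIdealOrderIso, LieIdeal.mem_comap]

lemma LieEquiv.image_eq_of_mem_iff (e : L ≃ₗ⁅R⁆ L') {I : LieIdeal R L} {J : LieIdeal R L'}
    (h : ∀ x, x ∈ I ↔ e x ∈ J) : e '' (I : Set L) = J := by
  ext y
  refine ⟨?_, fun hy => ⟨e.symm y, (h _).mpr (by simpa using hy), e.apply_symm_apply y⟩⟩
  rintro ⟨x, hx, rfl⟩
  exact (h x).mp hx

lemma LieIdeal.isAtom_of_isSimple (I : LieIdeal R L) [IsSimple R I] : IsAtom I := by
  refine ⟨(LieSubmodule.nontrivial_iff_ne_bot R L L).mp (IsSimple.nontrivial R I), fun J hJI => ?_⟩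
  rcases IsSimple.eq_bot_or_eq_top (J.comap I.incl) with hbot | htop
  · exact (LieIdeal.comap_incl_eq_bot.mp hbot).eq_bot_of_ge hJI.le
  · exact absurd (LieIdeal.comap_incl_eq_top.mp htop) hJI.not_ge

lemma LieIdeal.exists_eq_of_isAtom_of_iSup_eq_top {ι : Type*} {I : ι → LieIdeal R L}
    (hI : ∀ i, IsAtom (I i)) (htop : ⨆ i, (I i : Submodule R L) = ⊤) {S : LieIdeal R L}
    (hS : IsAtom S) (hS' : ¬IsLieAbelian S) : ∃ i, S = I i := by
  by_contra! hne
  have hcentral : ∀ x ∈ S, ∀ y : L, ⁅x, y⁆ = 0 := by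
    intro x hx y
    have hker : ∀ i, (I i : Submodule R L) ≤ LinearMap.ker (ad R L x) := fun i z hz => by
      rw [LinearMap.mem_ker, ad_apply, ← LieSubmodule.mem_bot (R := R) (L := L),
        ← ((hS.disjoint_of_ne (hI i) (hne i)).eq_bot)]
      exact LieSubmodule.lie_le_inf _ _ (LieSubmodule.lie_mem_lie hx hz)
    exact iSup_le hker (htop ▸ Submodule.mem_top)
  apply hS.1
  rw [← lie_eq_self_of_isAtom_of_nonabelian S hS hS', LieSubmodule.lie_eq_bot_iff]
  exact fun x hx y _ => hcentral x hx y

lemma LieEquiv.exists_mem_iff_apply_mem (e : L ≃ₗ⁅R⁆ L) {ι : Type*} {I : ι → LieIdeal R L}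
    (hI : ∀ i, IsAtom (I i)) (hI' : ∀ i, ¬IsLieAbelian (I i))
    (htop : ⨆ i, (I i : Submodule R L) = ⊤) (i : ι) : ∃ j, ∀ x, x ∈ I i ↔ e x ∈ I j := by
  have hS : IsAtom (e.lieIdealOrderIso (I i)) := (OrderIso.isAtom_iff _ _).mpr (hI i)
  have hS' : ¬IsLieAbelian (e.lieIdealOrderIso (I i)) := by
    rw [← lie_abelian_iff_equiv_lie_abelian
      (e.restrictLieIdeal (e.mem_iff_apply_mem_lieIdealOrderIso _))]
    exact hI' i
  obtain ⟨j, hj⟩ := LieIdeal.exists_eq_of_isAtom_of_iSup_eq_top hI htop hS hS'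
  exact ⟨j, fun x => hj ▸ e.mem_iff_apply_mem_lieIdealOrderIso (I i) x⟩

lemma LinearMap.BilinForm.lieInvariant_of_apply_lie_eq_apply_lie {B : LinearMap.BilinForm R L}
    (hB : ∀ x y z : L, B ⁅x, y⁆ z = B x ⁅y, z⁆) : B.lieInvariant L := fun x y z => by
  rw [← lie_skew, map_neg, LinearMap.neg_apply, hB]

lemma LieIdeal.le_orthogonal_of_disjoint {B : LinearMap.BilinForm R L} (hB : B.lieInvariant L)
    {I J : LieIdeal R L} (hI : IsAtom I) (hI' : ¬IsLieAbelian I) (hIJ : Disjoint I J) :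
    I ≤ InvariantForm.orthogonal B hB J := by
  rw [← lie_eq_self_of_isAtom_of_nonabelian I hI hI', LieSubmodule.lieIdeal_oper_eq_span,
    LieSubmodule.lieSpan_le]
  rintro _ ⟨x, y, rfl⟩
  rw [SetLike.mem_coe, InvariantForm.mem_orthogonal]
  intro z hz
  have hxz : ⁅(x : L), z⁆ = 0 := by
    rw [← LieSubmodule.mem_bot (R := R) (L := L), ← hIJ.eq_bot]
    exact LieSubmodule.lie_le_inf _ _ (LieSubmodule.lie_mem_lie x.2 hz)
  rw [← neg_eq_zero, ← hB, hxz, map_zero, LinearMap.zero_apply]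

lemma LieIdeal.apply_eq_zero_of_ne {ι : Type*} {I : ι → LieIdeal R L}
    {B : LinearMap.BilinForm R L} (hB : B.lieInvariant L) (hI : ∀ i, IsAtom (I i))
    (hI' : ∀ i, ¬IsLieAbelian (I i)) (hdisj : Pairwise (Disjoint on I)) {k l : ι} (hkl : k ≠ l)
    {u v : L} (hu : u ∈ I k) (hv : v ∈ I l) : B u v = 0 :=
  (InvariantForm.mem_orthogonal B hB _ v).mp
    (LieIdeal.le_orthogonal_of_disjoint hB (hI l) (hI' l) (hdisj hkl.symm) hv) u hu

lemma LieIdeal.exists_apply_ne_zero_of_nondegenerate [Nontrivial L] {ι : Type*}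
    {I : ι → LieIdeal R L} {B : LinearMap.BilinForm R L} (hB : B.lieInvariant L)
    (hnd : B.Nondegenerate) (hI : ∀ i, IsAtom (I i)) (hI' : ∀ i, ¬IsLieAbelian (I i))
    (hdisj : Pairwise (Disjoint on I)) (htop : ⨆ i, (I i : Submodule R L) = ⊤) :
    ∃ i, ∃ x ∈ I i, ∃ y ∈ I i, B x y ≠ 0 := by
  obtain ⟨i, x, hx, hx0⟩ : ∃ i, ∃ x ∈ I i, x ≠ 0 := by
    by_contra! h
    have hbot : ⊤ ≤ (⊥ : Submodule R L) :=
      htop ▸ iSup_le fun i x hx => (Submodule.mem_bot R).mpr (h i x hx)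
    exact top_ne_bot (le_bot_iff.mp hbot)
  refine ⟨i, x, hx, ?_⟩
  by_contra! h
  refine hx0 (hnd.1 x fun z => ?_)
  have hker : ∀ k, (I k : Submodule R L) ≤ LinearMap.ker (B x) := fun k z hz => by
    rcases eq_or_ne k i with rfl | hki
    · exact h z hz
    · exact LieIdeal.apply_eq_zero_of_ne hB hI hI' hdisj hki.symm hx hz
  exact iSup_le hker (htop ▸ Submodule.mem_top)

end

lemma LieEquiv.exists_pos_apply_apply_eq_mul {L : Type*} [LieRing L] [LieAlgebra ℂ L]
    [Module.Finite ℂ L] (e : L ≃ₗ⁅ℂ⁆ L) {B : LinearMap.BilinForm ℂ L} {I J : LieIdeal ℂ L}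
    (hI : ∃ c : ℝ, 0 < c ∧ ∀ x y : I, B x y = c * killingForm ℂ I x y)
    (hJ : ∃ c : ℝ, 0 < c ∧ ∀ x y : J, B x y = c * killingForm ℂ J x y)
    (he : ∀ x, x ∈ I ↔ e x ∈ J) :
    ∃ μ : ℝ, 0 < μ ∧ ∀ x ∈ I, ∀ y ∈ I, B (e x) (e y) = μ * B x y := by
  obtain ⟨c, hc, hBI⟩ := hI
  obtain ⟨d, hd, hBJ⟩ := hJ
  refine ⟨d / c, div_pos hd hc, fun x hx y hy => ?_⟩
  have hκ := killingForm_of_equiv_apply (e.restrictLieIdeal he) ⟨x, hx⟩ ⟨y, hy⟩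
  calc B (e x) (e y) = d * killingForm ℂ J ⟨e x, (he x).mp hx⟩ ⟨e y, (he y).mp hy⟩ :=
        hBJ ⟨e x, _⟩ ⟨e y, _⟩
    _ = d * killingForm ℂ I ⟨x, hx⟩ ⟨y, hy⟩ := by rw [← hκ]; rfl
    _ = (d / c : ℝ) * B x y := by
        rw [hBI ⟨x, hx⟩ ⟨y, hy⟩, ← mul_assoc, Complex.ofReal_div,
          div_mul_cancel₀ _ (Complex.ofReal_ne_zero.mpr hc.ne')]

theorem stmt15_general {L : Type*} [LieRing L] [LieAlgebra ℂ L] [Module.Finite ℂ L] [Nontrivial L]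
    {ι : Type*} [DecidableEq ι] (I : ι → LieIdeal ℂ L)
    (hsimple : ∀ i, LieAlgebra.IsSimple ℂ ↥(I i))
    (hdec : DirectSum.IsInternal fun i => ((I i : Submodule ℂ L)))
    (B : LinearMap.BilinForm ℂ L)
    (hnd : B.Nondegenerate)
    (hinv : ∀ x y z : L, B ⁅x, y⁆ z = B x ⁅y, z⁆)
    (hpos : ∀ i, ∃ c : ℝ, 0 < c ∧
      ∀ x y : ↥(I i), B ↑x ↑y = (c : ℂ) * killingForm ℂ ↥(I i) x y)
    (σ : L ≃ₗ⁅ℂ⁆ L) (hinvol : ∀ x, σ (σ x) = x)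
    (hf : ∀ i, σ '' ((I i : Submodule ℂ L) : Set L) ≠ ((I i : Submodule ℂ L) : Set L)) :
    ¬ (∀ x y : L, σ x = x → σ y = y → B x y = 0) := by
  intro hiso
  have hB := LinearMap.BilinForm.lieInvariant_of_apply_lie_eq_apply_lie hinv
  have hatom : ∀ i, IsAtom (I i) := fun i => have := hsimple i; (I i).isAtom_of_isSimple
  have hab : ∀ i, ¬IsLieAbelian (I i) := fun i => (hsimple i).non_abelian
  have htop := hdec.submodule_iSup_eq_top
  have hdisj : Pairwise (Disjoint on I) := fun i j hij =>
    LieSubmodule.disjoint_toSubmodule.mp (hdec.submodule_iSupIndep.pairwiseDisjoint hij)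
  obtain ⟨i, x, hxi, y, hyi, hxy⟩ :=
    LieIdeal.exists_apply_ne_zero_of_nondegenerate hB hnd hatom hab hdisj htop
  obtain ⟨j, hσ⟩ := σ.exists_mem_iff_apply_mem hatom hab htop i
  have hji : j ≠ i := by
    rintro rfl
    exact hf j (σ.image_eq_of_mem_iff hσ)
  obtain ⟨μ, hμ, hBσ⟩ := σ.exists_pos_apply_apply_eq_mul (hpos i) (hpos j) hσ
  have horth {k l : ι} (hkl : k ≠ l) {u v : L} : u ∈ I k → v ∈ I l → B u v = 0 :=
    LieIdeal.apply_eq_zero_of_ne hB hatom hab hdisj hkl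
  have hfix : ∀ z, σ (z + σ z) = z + σ z := fun z => by rw [map_add, hinvol, add_comm]
  have hμ' : ((1 + μ : ℝ) : ℂ) ≠ 0 := Complex.ofReal_ne_zero.mpr (by positivity)
  apply mul_ne_zero hμ' hxy
  calc ((1 + μ : ℝ) : ℂ) * B x y = B (x + σ x) (y + σ y) := by
        rw [map_add, map_add, LinearMap.add_apply, LinearMap.add_apply,
          horth hji.symm hxi ((hσ y).mp hyi), horth hji ((hσ x).mp hxi) hyi, hBσ x hxi y hyi]
        push_cast
        ring
    _ = 0 := hiso _ _ (hfix x) (hfix y)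

/-- Let `m̄` be a nonzero complex semisimple Lie algebra that is a direct sum of simple
ideals `mᵢ`, equipped with a symmetric nondegenerate invariant bilinear form whose
restriction to each `mᵢ` is a positive (real) multiple of the Killing form of `mᵢ`.
If `σ` is an involution of `m̄` that does not preserve any simple ideal `mᵢ` (an
`f`-involution), then the fixed point subalgebra `m̄^σ` is not isotropic with respect to
this form. -/
theorem stmt15 {L : Type*} [LieRing L] [LieAlgebra ℂ L] [Module.Finite ℂ L] [Nontrivial L]
    {ι : Type*} [DecidableEq ι] (I : ι → LieIdeal ℂ L)
    (hsimple : ∀ i, LieAlgebra.IsSimple ℂ ↥(I i))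
    (hdec : DirectSum.IsInternal fun i => ((I i : Submodule ℂ L)))
    (B : LinearMap.BilinForm ℂ L)
    (hsym : ∀ x y : L, B x y = B y x)
    (hnd : B.Nondegenerate)
    (hinv : ∀ x y z : L, B ⁅x, y⁆ z = B x ⁅y, z⁆)
    (hpos : ∀ i, ∃ c : ℝ, 0 < c ∧
      ∀ x y : ↥(I i), B ↑x ↑y = (c : ℂ) * killingForm ℂ ↥(I i) x y)
    (σ : L ≃ₗ⁅ℂ⁆ L) (hinvol : ∀ x, σ (σ x) = x)
    (hf : ∀ i, σ '' ((I i : Submodule ℂ L) : Set L) ≠ ((I i : Submodule ℂ L) : Set L)) :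
    ¬ (∀ x y : L, σ x = x → σ y = y → B x y = 0) :=
  stmt15_general I hsimple hdec B hnd hinv hpos σ hinvol hf
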